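/- Let (X,d) be a proper, geodesic, non-branching metric space, let Ω ⊆ X be open with ∂Ω ≠ ∅, let ε > 0, and let δ be the signed distance from ∂Ω. Then the image of O_ε ∩ {x : 0 < δ(x) < ε} under the foot-point projection is closed: the set {z ∈ ∂Ω : ∃ x ∈ O_ε ∩ {0 < δ < ε} ∩ T_δ^{nb} with d(x,z) = δ(x)} is a closed subset of X. -/

import Mathlib

open Metric Set Filter MeasureTheory
open scoped Topology

variable {X : Type*}

/-- A geodesic parameterized on `[0,1]`. -/
def IsGeodesic [MetricSpace X] (γ : ℝ → X) : Prop :=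
  ∀ s ∈ Set.Icc (0:ℝ) 1, ∀ t ∈ Set.Icc (0:ℝ) 1,
    dist (γ s) (γ t) = |s - t| * dist (γ 0) (γ 1)

/-- Every pair of points is joined by a geodesic. -/
def GeodesicSpace' (X : Type*) [MetricSpace X] : Prop :=
  ∀ x y : X, ∃ γ : ℝ → X, IsGeodesic γ ∧ γ 0 = x ∧ γ 1 = y

/-- Non-branching: two geodesics agreeing on `[0,t]`, `t ∈ (0,1)`, agree on `[0,1]`. -/
def NonBranching (X : Type*) [MetricSpace X] : Prop :=
  ∀ γ₁ γ₂ : ℝ → X, IsGeodesic γ₁ → IsGeodesic γ₂ →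
    ∀ t ∈ Set.Ioo (0:ℝ) 1, (∀ s ∈ Set.Icc (0:ℝ) t, γ₁ s = γ₂ s) →
      ∀ s ∈ Set.Icc (0:ℝ) 1, γ₁ s = γ₂ s

open scoped Classical in
/-- Signed distance from the boundary of `Ω`. -/
noncomputable def signedDist' [MetricSpace X] (Ω : Set X) (x : X) : ℝ :=
  if x ∈ Ω then Metric.infDist x (frontier Ω) else -Metric.infDist x (frontier Ω)
/-- The set `Γ_u`. -/
def Gamma [MetricSpace X] (u : X → ℝ) : Set (X × X) :=
  {p | u p.1 - u p.2 = dist p.1 p.2}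

/-- The transport relation `R_u = Γ_u ∪ Γ_u⁻¹`. -/
def Ru [MetricSpace X] (u : X → ℝ) : Set (X × X) :=
  Gamma u ∪ {p | (p.2, p.1) ∈ Gamma u}

/-- The transport set `T_u`. -/
def Tu [MetricSpace X] (u : X → ℝ) : Set X :=
  {x | ∃ y, y ≠ x ∧ (x, y) ∈ Ru u}

/-- The forward branching set `A⁺`. -/
def Aplus [MetricSpace X] (u : X → ℝ) : Set X :=
  {x ∈ Tu u | ∃ y z, (x, y) ∈ Gamma u ∧ (x, z) ∈ Gamma u ∧ (y, z) ∉ Ru u}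

/-- The backward branching set `A⁻`. -/
def Aminus [MetricSpace X] (u : X → ℝ) : Set X :=
  {x ∈ Tu u | ∃ y z, (y, x) ∈ Gamma u ∧ (z, x) ∈ Gamma u ∧ (y, z) ∉ Ru u}

/-- The non-branched transport set `T_u^{nb}`. -/
def Tnb [MetricSpace X] (u : X → ℝ) : Set X :=
  Tu u \ (Aplus u ∪ Aminus u)
/-- The set `O_ε` of points covered by geodesics of length `≥ ε` minimizing the
distance from `∂Ω`. -/
def Oeps [MetricSpace X] (Ω : Set X) (ε : ℝ) : Set X :=
  {x | x ∈ Ω ∧ ∃ γ : ℝ → X, IsGeodesic γ ∧ (∃ t ∈ Set.Icc (0:ℝ) 1, γ t = x) ∧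
    γ 0 ∈ frontier Ω ∧ signedDist' Ω (γ 1) = dist (γ 0) (γ 1) ∧ ε ≤ dist (γ 0) (γ 1)}

/-- The measured interior geodesic condition of size `ε`. -/
def mIGC [MetricSpace X] [MeasurableSpace X] (μ : Measure X) (Ω : Set X) (ε : ℝ) : Prop :=
  μ ({x | 0 < signedDist' Ω x ∧ signedDist' Ω x < ε} \ Oeps Ω ε) = 0


section Helpers
variable [MetricSpace X]

private lemma isGeodesic_of_dist {γ : ℝ → X} {L : ℝ}
    (h : ∀ s ∈ Set.Icc (0:ℝ) 1, ∀ t ∈ Set.Icc (0:ℝ) 1, dist (γ s) (γ t) = |s - t| * L) :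
    IsGeodesic γ := by
  intro s hs t ht
  rw [h s hs t ht, h 0 ⟨le_refl 0, zero_le_one⟩ 1 ⟨zero_le_one, le_refl 1⟩]
  norm_num

private lemma signedDist_of_mem {Ω : Set X} {x : X} (hx : x ∈ Ω) :
    signedDist' Ω x = Metric.infDist x (frontier Ω) := by simp [signedDist', hx]

private lemma signedDist_of_not_mem {Ω : Set X} {x : X} (hx : x ∉ Ω) :
    signedDist' Ω x = -Metric.infDist x (frontier Ω) := by simp [signedDist', hx]

private lemma signedDist_frontier {Ω : Set X} (hΩ : IsOpen Ω) {z : X} (hz : z ∈ frontier Ω) :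
    signedDist' Ω z = 0 := by
  have hzΩ : z ∉ Ω := fun h => hz.2 (hΩ.interior_eq.symm ▸ h)
  simp [signedDist', hzΩ, Metric.infDist_zero_of_mem hz]

private lemma mem_of_signedDist_pos {Ω : Set X} {x : X} (h : 0 < signedDist' Ω x) : x ∈ Ω := by
  by_contra hx
  rw [signedDist_of_not_mem hx] at h
  have := Metric.infDist_nonneg (s := frontier Ω) (x := x)
  linarith

private lemma signedDist_sub_le (hgeo : GeodesicSpace' X) {Ω : Set X} (hΩ : IsOpen Ω)
    (x y : X) : signedDist' Ω x - signedDist' Ω y ≤ dist x y := by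
  have hinf : ∀ a b : X, Metric.infDist a (frontier Ω) ≤ Metric.infDist b (frontier Ω) + dist a b :=
    fun a b => Metric.infDist_le_infDist_add_dist
  by_cases hx : x ∈ Ω
  · by_cases hy : y ∈ Ω
    · rw [signedDist_of_mem hx, signedDist_of_mem hy]
      linarith [hinf x y]
    · by_cases hyc : y ∈ closure Ω
      · have hyf : y ∈ frontier Ω := ⟨hyc, by rwa [hΩ.interior_eq]⟩
        have h0 : Metric.infDist y (frontier Ω) = 0 := Metric.infDist_zero_of_mem hyf
        rw [signedDist_of_mem hx, signedDist_of_not_mem hy, h0]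
        have := hinf x y
        rw [h0] at this
        linarith
      · -- geodesic crossing
        obtain ⟨γ, hγ, h0, h1⟩ := hgeo x y
        have hD : dist (γ 0) (γ 1) = dist x y := by rw [h0, h1]
        have hcont : ContinuousOn γ (Set.Icc 0 1) := by
          refine LipschitzOnWith.continuousOn (K := ⟨dist x y, dist_nonneg⟩) ?_
          refine LipschitzOnWith.of_dist_le_mul fun s hs t ht => ?_
          rw [hγ s hs t ht, hD, Real.dist_eq, mul_comm]
          exact le_of_eq rfl
        have hcross : ∃ t ∈ Set.Icc (0:ℝ) 1, γ t ∈ frontier Ω := by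
          by_contra hno
          push_neg at hno
          have hpre : IsPreconnected (γ '' Set.Icc 0 1) :=
            isPreconnected_Icc.image γ hcont
          have hsub : γ '' Set.Icc 0 1 ⊆ Ω ∪ (closure Ω)ᶜ := by
            rintro _ ⟨t, ht, rfl⟩
            rcases em (γ t ∈ Ω) with h | h
            · exact Or.inl h
            · rcases em (γ t ∈ closure Ω) with h2 | h2
              · exact absurd ⟨h2, by rwa [hΩ.interior_eq]⟩ (hno t ht)
              · exact Or.inr h2
          obtain ⟨q, hq⟩ := hpre Ω (closure Ω)ᶜ hΩ isClosed_closure.isOpen_compl hsub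
            ⟨x, ⟨0, ⟨le_refl 0, zero_le_one⟩, h0⟩, hx⟩
            ⟨y, ⟨1, ⟨zero_le_one, le_refl 1⟩, h1⟩, hyc⟩
          exact hq.2.2 (subset_closure hq.2.1)
        obtain ⟨t, ht, htf⟩ := hcross
        have e1 : Metric.infDist x (frontier Ω) ≤ t * dist x y := by
          have h := Metric.infDist_le_dist_of_mem (x := x) htf
          have h2 : dist (γ 0) (γ t) = t * dist x y := by
            rw [hγ 0 ⟨le_refl 0, zero_le_one⟩ t ht, hD, zero_sub, abs_neg,
              abs_of_nonneg ht.1]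
          rw [h0] at h2
          linarith [h, h2.le]
        have e2 : Metric.infDist y (frontier Ω) ≤ (1 - t) * dist x y := by
          have h := Metric.infDist_le_dist_of_mem (x := y) htf
          have h2 : dist (γ 1) (γ t) = (1 - t) * dist x y := by
            rw [hγ 1 ⟨zero_le_one, le_refl 1⟩ t ht, hD, abs_of_nonneg (by linarith [ht.2])]
          rw [h1] at h2
          linarith [h, h2.le]
        have hynΩ : y ∉ Ω := fun h => hyc (subset_closure h)
        rw [signedDist_of_mem hx, signedDist_of_not_mem hynΩ]
        nlinarith [e1, e2]
  · by_cases hy : y ∈ Ω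
    · rw [signedDist_of_not_mem hx, signedDist_of_mem hy]
      have h1 := Metric.infDist_nonneg (s := frontier Ω) (x := x)
      have h2 := Metric.infDist_nonneg (s := frontier Ω) (x := y)
      linarith [dist_nonneg (x := x) (y := y)]
    · rw [signedDist_of_not_mem hx, signedDist_of_not_mem hy]
      have := hinf y x
      rw [dist_comm y x] at this
      linarith

private lemma signedDist_lipschitz (hgeo : GeodesicSpace' X) {Ω : Set X} (hΩ : IsOpen Ω) :
    LipschitzWith 1 (signedDist' Ω) := by
  refine LipschitzWith.of_dist_le_mul fun a b => ?_
  rw [NNReal.coe_one, one_mul, Real.dist_eq, abs_sub_le_iff]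
  refine ⟨signedDist_sub_le hgeo hΩ a b, ?_⟩
  rw [dist_comm a b]
  exact signedDist_sub_le hgeo hΩ b a

end Helpers

section Branch
variable [MetricSpace X]

private lemma concat_geodesic {p x y : X} {c a : ℝ} (hc : 0 < c) (ha : 0 < a)
    {σ α : ℝ → X} (hσ : IsGeodesic σ) (hα : IsGeodesic α)
    (hσ0 : σ 0 = p) (hσ1 : σ 1 = x) (hα0 : α 0 = x) (hα1 : α 1 = y)
    (hσc : dist (σ 0) (σ 1) = c) (hαa : dist (α 0) (α 1) = a)
    (hpy : dist p y = c + a) :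
    ∃ γ : ℝ → X, (∀ s ∈ Set.Icc (0:ℝ) 1, ∀ t ∈ Set.Icc (0:ℝ) 1,
        dist (γ s) (γ t) = |s - t| * (c + a)) ∧
      γ 0 = p ∧ γ 1 = y ∧
      ∀ s : ℝ, s * (c + a) ≤ c → γ s = σ (s * (c + a) / c) := by
  classical
  set L := c + a with hLdef
  have hLpos : 0 < L := by positivity
  set γ : ℝ → X := fun s => if s * L ≤ c then σ (s * L / c) else α ((s * L - c) / a)
    with hγdef
  have hσd : ∀ u v : ℝ, 0 ≤ u → u ≤ c → 0 ≤ v → v ≤ c →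
      dist (σ (u / c)) (σ (v / c)) = |u - v| := by
    intro u v h1 h2 h3 h4
    rw [hσ (u/c) ⟨by positivity, (div_le_one hc).mpr h2⟩ (v/c)
      ⟨by positivity, (div_le_one hc).mpr h4⟩, hσc, div_sub_div_same, abs_div,
      abs_of_pos hc, div_mul_cancel₀ _ hc.ne']
  have hαd : ∀ u v : ℝ, 0 ≤ u → u ≤ a → 0 ≤ v → v ≤ a →
      dist (α (u / a)) (α (v / a)) = |u - v| := by
    intro u v h1 h2 h3 h4
    rw [hα (u/a) ⟨by positivity, (div_le_one ha).mpr h2⟩ (v/a)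
      ⟨by positivity, (div_le_one ha).mpr h4⟩, hαa, div_sub_div_same, abs_div,
      abs_of_pos ha, div_mul_cancel₀ _ ha.ne']
  have hpσ : ∀ u : ℝ, 0 ≤ u → u ≤ c → dist p (σ (u / c)) = u := by
    intro u h1 h2
    have h := hσd 0 u le_rfl hc.le h1 h2
    rw [zero_div, hσ0, zero_sub, abs_neg, abs_of_nonneg h1] at h
    exact h
  have hxσ : ∀ u : ℝ, 0 ≤ u → u ≤ c → dist (σ (u / c)) x = c - u := by
    intro u h1 h2
    have h := hσd u c h1 h2 hc.le le_rfl
    rw [div_self hc.ne', hσ1, abs_of_nonpos (by linarith), neg_sub] at h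
    exact h
  have hxα : ∀ v : ℝ, 0 ≤ v → v ≤ a → dist x (α (v / a)) = v := by
    intro v h1 h2
    have h := hαd 0 v le_rfl ha.le h1 h2
    rw [zero_div, hα0, zero_sub, abs_neg, abs_of_nonneg h1] at h
    exact h
  have hyα : ∀ v : ℝ, 0 ≤ v → v ≤ a → dist (α (v / a)) y = a - v := by
    intro v h1 h2
    have h := hαd v a h1 h2 ha.le le_rfl
    rw [div_self ha.ne', hα1, abs_of_nonpos (by linarith), neg_sub] at h
    exact h
  have hmix : ∀ u v : ℝ, 0 ≤ u → u ≤ c → c ≤ v → v ≤ L →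
      dist (σ (u / c)) (α ((v - c) / a)) = v - u := by
    intro u v hu1 hu2 hv1 hv2
    have hva1 : 0 ≤ v - c := by linarith
    have hva2 : v - c ≤ a := by rw [hLdef] at hv2; linarith
    have hub : dist (σ (u/c)) (α ((v-c)/a)) ≤ v - u := by
      calc dist (σ (u/c)) (α ((v-c)/a)) ≤ dist (σ (u/c)) x + dist x (α ((v-c)/a)) :=
            dist_triangle _ _ _
        _ = (c - u) + (v - c) := by rw [hxσ u hu1 hu2, hxα (v-c) hva1 hva2]
        _ = v - u := by ring
    have t1 : dist p (α ((v-c)/a)) ≤ dist p (σ (u/c)) + dist (σ (u/c)) (α ((v-c)/a)) :=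
      dist_triangle _ _ _
    have t3 : dist p y ≤ dist p (α ((v-c)/a)) + dist (α ((v-c)/a)) y := dist_triangle _ _ _
    rw [hpy, hyα (v-c) hva1 hva2] at t3
    rw [hpσ u hu1 hu2] at t1
    linarith
  have hmem : ∀ s : ℝ, s ∈ Set.Icc (0:ℝ) 1 → 0 ≤ s * L ∧ s * L ≤ L := by
    intro s hs
    constructor
    · exact mul_nonneg hs.1 hLpos.le
    · nlinarith [hs.2]
  refine ⟨γ, ?_, ?_, ?_, ?_⟩
  · intro s hs t ht
    obtain ⟨hu1, hu2⟩ := hmem s hs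
    obtain ⟨hv1, hv2⟩ := hmem t ht
    have habs : |s - t| * L = |s * L - t * L| := by
      rw [show s * L - t * L = (s - t) * L by ring, abs_mul, abs_of_pos hLpos]
    rw [habs]
    by_cases h1 : s * L ≤ c <;> by_cases h2 : t * L ≤ c
    · simp only [hγdef, if_pos h1, if_pos h2]
      exact hσd _ _ hu1 h1 hv1 h2
    · simp only [hγdef, if_pos h1, if_neg h2]
      rw [hmix _ _ hu1 h1 (le_of_not_ge h2) hv2,
        abs_of_nonpos (by linarith [le_of_not_ge h2]), neg_sub]
    · simp only [hγdef, if_neg h1, if_pos h2]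
      rw [dist_comm, hmix _ _ hv1 h2 (le_of_not_ge h1) hu2,
        abs_of_nonneg (by linarith [le_of_not_ge h1])]
    · simp only [hγdef, if_neg h1, if_neg h2]
      have := hαd (s * L - c) (t * L - c) (by linarith [le_of_not_ge h1]) (by have h := hu2; rw [hLdef] at h ⊢; linarith)
        (by linarith [le_of_not_ge h2]) (by have h := hv2; rw [hLdef] at h ⊢; linarith)
      rw [this]
      congr 1
      ring
  · simp only [hγdef]
    rw [if_pos (by simpa using hc.le : (0:ℝ) * L ≤ c)]
    rw [zero_mul, zero_div, hσ0]
  · simp only [hγdef]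
    have hn : ¬ (1 * L ≤ c) := by rw [one_mul, hLdef]; intro h; linarith
    rw [if_neg hn, one_mul, hLdef]
    rw [show c + a - c = a by ring, div_self ha.ne', hα1]
  · intro s hsc
    simp only [hγdef]
    rw [if_pos hsc]

end Branch

section Key
variable [MetricSpace X]

private lemma nonbranch_key (hgeo : GeodesicSpace' X) (hnb : NonBranching X)
    (p x y w : X) (hpx : 0 < dist p x)
    (hy : dist p y = dist p x + dist x y) (hw : dist p w = dist p x + dist x w)
    (hab : dist x y ≤ dist x w) :
    dist y w = dist x w - dist x y := by
  rcases eq_or_lt_of_le (dist_nonneg : (0:ℝ) ≤ dist x y) with h0 | ha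
  · have hxy : x = y := dist_eq_zero.mp h0.symm
    rw [← hxy, dist_self x, sub_zero]
  · obtain ⟨σ, hσ, hσ0, hσ1⟩ := hgeo p x
    obtain ⟨α, hα, hα0, hα1⟩ := hgeo x y
    obtain ⟨β, hβ, hβ0, hβ1⟩ := hgeo x w
    have hb : 0 < dist x w := lt_of_lt_of_le ha hab
    obtain ⟨γ₁, hγ₁d, hγ₁0, hγ₁1, hγ₁σ⟩ :=
      concat_geodesic hpx ha hσ hα hσ0 hσ1 hα0 hα1 (by rw [hσ0, hσ1]) (by rw [hα0, hα1]) hy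
    obtain ⟨γ₂, hγ₂d, hγ₂0, hγ₂1, hγ₂σ⟩ :=
      concat_geodesic hpx hb hσ hβ hσ0 hσ1 hβ0 hβ1 (by rw [hσ0, hσ1]) (by rw [hβ0, hβ1]) hw
    have hL₁ : 0 < dist p x + dist x y := by positivity
    have hL₂ : 0 < dist p x + dist x w := by positivity
    have hL₁₂ : dist p x + dist x y ≤ dist p x + dist x w := by linarith
    set c := dist p x
    set a := dist x y
    set b := dist x w
    set L₁ := c + a with hL₁def
    set L₂ := c + b with hL₂def
    set γ₂' : ℝ → X := fun s => γ₂ (s * (L₁ / L₂)) with hγ₂'def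
    have hratio : ∀ s : ℝ, s ∈ Set.Icc (0:ℝ) 1 → s * (L₁ / L₂) ∈ Set.Icc (0:ℝ) 1 := by
      intro s hs
      have hs1 := hs.1
      constructor
      · positivity
      · calc s * (L₁/L₂) ≤ 1 * (L₁/L₂) := by
              apply mul_le_mul_of_nonneg_right hs.2
              positivity
          _ ≤ 1 := by rw [one_mul]; exact (div_le_one hL₂).mpr hL₁₂
    have hγ₂'d : ∀ s ∈ Set.Icc (0:ℝ) 1, ∀ t ∈ Set.Icc (0:ℝ) 1,
        dist (γ₂' s) (γ₂' t) = |s - t| * L₁ := by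
      intro s hs t ht
      simp only [hγ₂'def]
      rw [hγ₂d _ (hratio s hs) _ (hratio t ht),
        show s * (L₁/L₂) - t * (L₁/L₂) = (s - t) * (L₁/L₂) by ring, abs_mul,
        abs_of_nonneg (by positivity : (0:ℝ) ≤ L₁/L₂)]
      rw [mul_assoc, div_mul_cancel₀ _ hL₂.ne']
    have hg₁ : IsGeodesic γ₁ := isGeodesic_of_dist hγ₁d
    have hg₂ : IsGeodesic γ₂' := isGeodesic_of_dist hγ₂'d
    have ht₀ : c / L₁ ∈ Set.Ioo (0:ℝ) 1 :=
      ⟨by positivity, (div_lt_one hL₁).mpr (by linarith)⟩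
    have hagree : ∀ s ∈ Set.Icc (0:ℝ) (c / L₁), γ₁ s = γ₂' s := by
      intro s hs
      have h1 : s * L₁ ≤ c := (le_div_iff₀ hL₁).mp hs.2
      have h2 : (s * (L₁/L₂)) * L₂ ≤ c := by
        rw [mul_assoc, div_mul_cancel₀ _ hL₂.ne']
        exact h1
      rw [hγ₁σ s h1]
      simp only [hγ₂'def]
      rw [hγ₂σ _ h2]
      congr 1
      rw [mul_assoc, div_mul_cancel₀ _ hL₂.ne']
    have hend := hnb γ₁ γ₂' hg₁ hg₂ (c / L₁) ht₀ hagree 1 ⟨zero_le_one, le_refl 1⟩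
    have hyeq : y = γ₂ (1 * (L₁ / L₂)) := by
      rw [← hγ₁1, hend]
    have hfin : dist y w = dist (γ₂ (1 * (L₁/L₂))) (γ₂ 1) := by
      rw [← hγ₂1, ← hyeq]
    rw [hfin, hγ₂d _ (hratio 1 ⟨zero_le_one, le_refl 1⟩) 1 ⟨zero_le_one, le_refl 1⟩,
      one_mul, abs_of_nonpos (by
        have : L₁ / L₂ ≤ 1 := (div_le_one hL₂).mpr hL₁₂
        linarith)]
    rw [neg_sub, sub_mul, one_mul, div_mul_cancel₀ _ hL₂.ne']
    rw [hL₁def, hL₂def]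
    ring

end Key

/-- the image of `O_ε ∩ {0 < δ < ε}` under the foot-point
projection is a closed subset of `X`. -/
theorem footpoint_image_closed
    [MetricSpace X] [ProperSpace X]
    (hgeo : GeodesicSpace' X) (hnb : NonBranching X)
    (Ω : Set X) (hΩ : IsOpen Ω) (hfr : (frontier Ω).Nonempty)
    (ε : ℝ) (hε : 0 < ε) :
    IsClosed {z | z ∈ frontier Ω ∧
      ∃ x ∈ Oeps Ω ε ∩ {x | 0 < signedDist' Ω x ∧ signedDist' Ω x < ε} ∩
          Tnb (signedDist' Ω), dist x z = signedDist' Ω x} := by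
  classical
  rw [← isSeqClosed_iff_isClosed]
  intro zs z hzs hz
  have hLip : ∀ a b : X, signedDist' Ω a - signedDist' Ω b ≤ dist a b :=
    fun a b => signedDist_sub_le hgeo hΩ a b
  choose hzfr xs hxsmem hdxz using hzs
  have hOd : ∀ n, xs n ∈ Oeps Ω ε := fun n => (hxsmem n).1.1
  have hmid : ∀ n, 0 < signedDist' Ω (xs n) ∧ signedDist' Ω (xs n) < ε := fun n => (hxsmem n).1.2
  have htnb : ∀ n, xs n ∈ Tnb (signedDist' Ω) := fun n => (hxsmem n).2
  choose hxΩn γn hγgeo hex hfr0 hδ1 hεL using hOd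
  choose tn htn hγt using hex
  have hLpos : ∀ n, 0 < dist (γn n 0) (γn n 1) := fun n => lt_of_lt_of_le hε (hεL n)
  have h01 : (0:ℝ) ∈ Set.Icc (0:ℝ) 1 := ⟨le_refl 0, zero_le_one⟩
  have h11 : (1:ℝ) ∈ Set.Icc (0:ℝ) 1 := ⟨zero_le_one, le_refl 1⟩
  have hδγ : ∀ n, ∀ s ∈ Set.Icc (0:ℝ) 1,
      signedDist' Ω (γn n s) = s * dist (γn n 0) (γn n 1) := by
    intro n s hs
    have h0 : signedDist' Ω (γn n 0) = 0 := signedDist_frontier hΩ (hfr0 n)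
    have e1 := hLip (γn n s) (γn n 0)
    have e2 := hLip (γn n 1) (γn n s)
    rw [hγgeo n s hs 0 h01, sub_zero, abs_of_nonneg hs.1] at e1
    rw [hγgeo n 1 h11 s hs, abs_of_nonneg (by linarith [hs.2]), sub_mul, one_mul] at e2
    rw [h0, sub_zero] at e1
    rw [hδ1 n] at e2
    linarith
  have hzeq : ∀ n, zs n = γn n 0 := by
    intro n
    have hδz : signedDist' Ω (zs n) = 0 := signedDist_frontier hΩ (hzfr n)
    have hδ0 : signedDist' Ω (γn n 0) = 0 := signedDist_frontier hΩ (hfr0 n)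
    have hδx : signedDist' Ω (xs n) = tn n * dist (γn n 0) (γn n 1) := by
      rw [← hγt n]; exact hδγ n (tn n) (htn n)
    have hG1 : (xs n, zs n) ∈ Gamma (signedDist' Ω) := by
      show signedDist' Ω (xs n) - signedDist' Ω (zs n) = dist (xs n) (zs n)
      rw [hδz, sub_zero, hdxz n]
    have hG2 : (xs n, γn n 0) ∈ Gamma (signedDist' Ω) := by
      show signedDist' Ω (xs n) - signedDist' Ω (γn n 0) = dist (xs n) (γn n 0)
      rw [hδ0, sub_zero, hδx, ← hγt n, hγgeo n (tn n) (htn n) 0 h01, sub_zero,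
        abs_of_nonneg (htn n).1]
    have hR : (zs n, γn n 0) ∈ Ru (signedDist' Ω) := by
      by_contra hR
      exact ((htnb n).2) (Or.inl ⟨(htnb n).1, zs n, γn n 0, hG1, hG2, hR⟩)
    rcases hR with h | h
    · have h' : signedDist' Ω (zs n) - signedDist' Ω (γn n 0) = dist (zs n) (γn n 0) := h
      rw [hδz, hδ0] at h'
      exact eq_of_dist_eq_zero (by linarith)
    · have h' : signedDist' Ω (γn n 0) - signedDist' Ω (zs n) = dist (γn n 0) (zs n) := h
      rw [hδz, hδ0] at h'
      exact (eq_of_dist_eq_zero (by linarith)).symm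
  set cl : ℝ → ℝ := fun s => max 0 (min s 1) with hcldef
  have hclmem : ∀ s : ℝ, cl s ∈ Set.Icc (0:ℝ) 1 := fun s =>
    ⟨le_max_left _ _, max_le zero_le_one (min_le_right s 1)⟩
  have hcleq : ∀ s ∈ Set.Icc (0:ℝ) 1, cl s = s := by
    intro s hs
    simp only [hcldef]
    rw [min_eq_left hs.2, max_eq_right hs.1]
  set ηn : ℕ → ℝ → X := fun n s => γn n (s * (ε / dist (γn n 0) (γn n 1))) with hηndef
  have hηmem : ∀ n, ∀ s ∈ Set.Icc (0:ℝ) 1,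
      s * (ε / dist (γn n 0) (γn n 1)) ∈ Set.Icc (0:ℝ) 1 := by
    intro n s hs
    have hL := hLpos n
    have hq : (0:ℝ) ≤ ε / dist (γn n 0) (γn n 1) := div_nonneg hε.le dist_nonneg
    refine ⟨mul_nonneg hs.1 hq, ?_⟩
    calc s * (ε / dist (γn n 0) (γn n 1)) ≤ 1 * (ε / dist (γn n 0) (γn n 1)) :=
          mul_le_mul_of_nonneg_right hs.2 hq
      _ ≤ 1 := by rw [one_mul]; exact (div_le_one hL).mpr (hεL n)
  have hηd : ∀ n, ∀ s ∈ Set.Icc (0:ℝ) 1, ∀ t ∈ Set.Icc (0:ℝ) 1,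
      dist (ηn n s) (ηn n t) = |s - t| * ε := by
    intro n s hs t ht
    simp only [hηndef]
    rw [hγgeo n _ (hηmem n s hs) _ (hηmem n t ht),
      show s * (ε / dist (γn n 0) (γn n 1)) - t * (ε / dist (γn n 0) (γn n 1))
        = (s - t) * (ε / dist (γn n 0) (γn n 1)) by ring,
      abs_mul, abs_of_nonneg (div_nonneg hε.le dist_nonneg),
      mul_assoc, div_mul_cancel₀ _ (hLpos n).ne']
  have hηn0 : ∀ n, ηn n 0 = zs n := by
    intro n
    simp only [hηndef, zero_mul]
    exact (hzeq n).symm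
  have hηδ1 : ∀ n, signedDist' Ω (ηn n 1) = ε := by
    intro n
    simp only [hηndef, one_mul]
    rw [hδγ n _ ⟨div_nonneg hε.le dist_nonneg, (div_le_one (hLpos n)).mpr (hεL n)⟩,
      div_mul_cancel₀ _ (hLpos n).ne']
  set U : Ultrafilter ℕ := Ultrafilter.of atTop with hUdef
  have hUle : (U : Filter ℕ) ≤ atTop := Ultrafilter.of_le _
  have hztendU : Tendsto zs (U : Filter ℕ) (𝓝 z) := hz.mono_left hUle
  have hKc : IsCompact (Metric.closedBall z (ε + 1)) := isCompact_closedBall z _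
  have hev : ∀ s : ℝ, ∀ᶠ n in (U : Filter ℕ), ηn n (cl s) ∈ Metric.closedBall z (ε + 1) := by
    intro s
    have h1 : ∀ᶠ n in atTop, zs n ∈ Metric.closedBall z 1 :=
      hz (Metric.closedBall_mem_nhds z one_pos)
    refine (h1.filter_mono hUle).mono fun n hn => ?_
    have h2 : dist (ηn n (cl s)) (zs n) ≤ ε := by
      rw [← hηn0 n, hηd n (cl s) (hclmem s) 0 h01, sub_zero, abs_of_nonneg (hclmem s).1]
      nlinarith [(hclmem s).2, hε.le]
    have h3 : dist (zs n) z ≤ 1 := hn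
    rw [Metric.mem_closedBall]
    calc dist (ηn n (cl s)) z ≤ dist (ηn n (cl s)) (zs n) + dist (zs n) z :=
          dist_triangle _ _ _
      _ ≤ ε + 1 := by linarith
  have hlim : ∀ s : ℝ, ∃ q, Tendsto (fun n => ηn n (cl s)) (U : Filter ℕ) (𝓝 q) := by
    intro s
    have hmemU : Metric.closedBall z (ε + 1) ∈ Ultrafilter.map (fun n => ηn n (cl s)) U := by
      rw [Ultrafilter.mem_map]
      exact hev s
    obtain ⟨q, _, hq⟩ := hKc.ultrafilter_le_nhds (Ultrafilter.map (fun n => ηn n (cl s)) U)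
      (le_principal_iff.mpr hmemU)
    exact ⟨q, by rwa [Ultrafilter.coe_map] at hq⟩
  choose η hη0t using hlim
  have hηt : ∀ s ∈ Set.Icc (0:ℝ) 1, Tendsto (fun n => ηn n s) (U : Filter ℕ) (𝓝 (η s)) := by
    intro s hs
    have h := hη0t s
    rwa [hcleq s hs] at h
  have hηdist : ∀ s ∈ Set.Icc (0:ℝ) 1, ∀ t ∈ Set.Icc (0:ℝ) 1,
      dist (η s) (η t) = |s - t| * ε := by
    intro s hs t ht
    refine tendsto_nhds_unique ((hηt s hs).dist (hηt t ht)) ?_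
    have heq : (fun n => dist (ηn n s) (ηn n t)) = fun _ => |s - t| * ε :=
      funext fun n => hηd n s hs t ht
    rw [heq]
    exact tendsto_const_nhds
  have hzfr' : z ∈ frontier Ω :=
    isClosed_frontier.mem_of_tendsto hz (Filter.Eventually.of_forall hzfr)
  have hηz : η 0 = z := by
    refine tendsto_nhds_unique (hηt 0 h01) ?_
    have heq : (fun n => ηn n 0) = zs := funext hηn0
    rw [heq]
    exact hztendU
  have hδcont : Continuous (signedDist' Ω) := (signedDist_lipschitz hgeo hΩ).continuous
  have hδη1 : signedDist' Ω (η 1) = ε := by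
    refine tendsto_nhds_unique ((hδcont.tendsto (η 1)).comp (hηt 1 h11)) ?_
    have heq : ((signedDist' Ω) ∘ fun n => ηn n 1) = fun _ => ε := funext fun n => hηδ1 n
    rw [heq]
    exact tendsto_const_nhds
  have hδη : ∀ s ∈ Set.Icc (0:ℝ) 1, signedDist' Ω (η s) = s * ε := by
    intro s hs
    have e1 := hLip (η s) (η 0)
    have e2 := hLip (η 1) (η s)
    rw [hηdist s hs 0 h01, sub_zero, abs_of_nonneg hs.1] at e1
    rw [hηdist 1 h11 s hs, abs_of_nonneg (by linarith [hs.2]), sub_mul, one_mul] at e2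
    rw [hηz, signedDist_frontier hΩ hzfr', sub_zero] at e1
    rw [hδη1] at e2
    linarith
  have hhalf : (1/2 : ℝ) ∈ Set.Icc (0:ℝ) 1 := by norm_num
  have hδx : signedDist' Ω (η (1/2)) = ε / 2 := by
    rw [hδη _ hhalf]
    ring
  have hd0 : dist (η (1/2)) (η 0) = ε / 2 := by
    rw [hηdist _ hhalf 0 h01, sub_zero, abs_of_nonneg (by norm_num : (0:ℝ) ≤ 1/2)]
    ring
  have hd1 : dist (η 1) (η (1/2)) = ε / 2 := by
    rw [hηdist 1 h11 _ hhalf, abs_of_nonneg (by norm_num : (0:ℝ) ≤ 1 - 1/2)]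
    ring
  have hd01 : dist (η 0) (η 1) = ε := by
    rw [hηdist 0 h01 1 h11]
    norm_num
  have hηgeo : IsGeodesic η := isGeodesic_of_dist hηdist
  have hdxz' : dist (η (1/2)) z = ε / 2 := by rw [← hηz]; exact hd0
  have hdzx : dist z (η (1/2)) = ε / 2 := by rw [dist_comm]; exact hdxz'
  have hxΩ' : η (1/2) ∈ Ω := mem_of_signedDist_pos (by rw [hδx]; positivity)
  have hTu : η (1/2) ∈ Tu (signedDist' Ω) := by
    refine ⟨z, ?_, Or.inl ?_⟩
    · intro hzx
      rw [hzx, dist_self] at hdxz'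
      linarith
    · show signedDist' Ω (η (1/2)) - signedDist' Ω z = dist (η (1/2)) z
      rw [hδx, signedDist_frontier hΩ hzfr', sub_zero, hdxz']
  have hnotA : η (1/2) ∉ Aplus (signedDist' Ω) ∪ Aminus (signedDist' Ω) := by
    intro hA
    rcases hA with hA | hA
    · obtain ⟨-, y, w, hxy, hxw, hR⟩ := hA
      have hxyG : signedDist' Ω (η (1/2)) - signedDist' Ω y = dist (η (1/2)) y := hxy
      have hxwG : signedDist' Ω (η (1/2)) - signedDist' Ω w = dist (η (1/2)) w := hxw
      have hy' : dist (η 1) y = dist (η 1) (η (1/2)) + dist (η (1/2)) y := by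
        have tri := dist_triangle (η 1) (η (1/2)) y
        have low := hLip (η 1) y
        rw [hδη1] at low
        rw [hd1]
        have hyv : signedDist' Ω y = ε/2 - dist (η (1/2)) y := by
          rw [← hδx]
          linarith [hxyG]
        rw [hyv] at low
        rw [hd1] at tri
        linarith
      have hw' : dist (η 1) w = dist (η 1) (η (1/2)) + dist (η (1/2)) w := by
        have tri := dist_triangle (η 1) (η (1/2)) w
        have low := hLip (η 1) w
        rw [hδη1] at low
        rw [hd1]
        have hwv : signedDist' Ω w = ε/2 - dist (η (1/2)) w := by
          rw [← hδx]
          linarith [hxwG]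
        rw [hwv] at low
        rw [hd1] at tri
        linarith
      have hppos : 0 < dist (η 1) (η (1/2)) := by rw [hd1]; positivity
      rcases le_total (dist (η (1/2)) y) (dist (η (1/2)) w) with hle | hle
      · have hkey := nonbranch_key hgeo hnb (η 1) (η (1/2)) y w hppos hy' hw' hle
        refine hR (Or.inl ?_)
        show signedDist' Ω y - signedDist' Ω w = dist y w
        rw [hkey]
        linarith [hxyG, hxwG]
      · have hkey := nonbranch_key hgeo hnb (η 1) (η (1/2)) w y hppos hw' hy' hle
        refine hR (Or.inr ?_)
        show signedDist' Ω w - signedDist' Ω y = dist w y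
        rw [hkey]
        linarith [hxyG, hxwG]
    · obtain ⟨-, y, w, hyx, hwx, hR⟩ := hA
      have hyxG : signedDist' Ω y - signedDist' Ω (η (1/2)) = dist y (η (1/2)) := hyx
      have hwxG : signedDist' Ω w - signedDist' Ω (η (1/2)) = dist w (η (1/2)) := hwx
      have hy' : dist z y = dist z (η (1/2)) + dist (η (1/2)) y := by
        have tri := dist_triangle z (η (1/2)) y
        have low := hLip y z
        rw [signedDist_frontier hΩ hzfr', sub_zero, dist_comm y z] at low
        rw [hdzx] at tri ⊢
        have hyv : signedDist' Ω y = ε/2 + dist (η (1/2)) y := by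
          rw [← hδx, dist_comm (η (1/2)) y]
          linarith [hyxG]
        rw [hyv] at low
        linarith
      have hw' : dist z w = dist z (η (1/2)) + dist (η (1/2)) w := by
        have tri := dist_triangle z (η (1/2)) w
        have low := hLip w z
        rw [signedDist_frontier hΩ hzfr', sub_zero, dist_comm w z] at low
        rw [hdzx] at tri ⊢
        have hwv : signedDist' Ω w = ε/2 + dist (η (1/2)) w := by
          rw [← hδx, dist_comm (η (1/2)) w]
          linarith [hwxG]
        rw [hwv] at low
        linarith
      have hppos : 0 < dist z (η (1/2)) := by rw [hdzx]; positivity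
      rcases le_total (dist (η (1/2)) y) (dist (η (1/2)) w) with hle | hle
      · have hkey := nonbranch_key hgeo hnb z (η (1/2)) y w hppos hy' hw' hle
        refine hR (Or.inr ?_)
        show signedDist' Ω w - signedDist' Ω y = dist w y
        rw [dist_comm w y, hkey]
        rw [dist_comm y (η (1/2))] at hyxG
        rw [dist_comm w (η (1/2))] at hwxG
        linarith [hyxG, hwxG]
      · have hkey := nonbranch_key hgeo hnb z (η (1/2)) w y hppos hw' hy' hle
        refine hR (Or.inl ?_)
        show signedDist' Ω y - signedDist' Ω w = dist y w
        rw [dist_comm y w, hkey]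
        rw [dist_comm y (η (1/2))] at hyxG
        rw [dist_comm w (η (1/2))] at hwxG
        linarith [hyxG, hwxG]
  refine ⟨hzfr', η (1/2), ⟨⟨⟨hxΩ', η, hηgeo, ⟨1/2, hhalf, rfl⟩, ?_, ?_, ?_⟩, ?_, ?_⟩,
    hTu, hnotA⟩, ?_⟩
  · rw [hηz]; exact hzfr'
  · rw [hδη1, hd01]
  · rw [hd01]
  · rw [hδx]; positivity
  · rw [hδx]; linarith
  · rw [hδx, hdxz']
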